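/- In the motivational example with q a primitive nth root of unity, D₁ is a (σ,1)-skew derivation and D₂ is a (1,σ)-skew derivation of S_q(V)#G: for all a, b in S_q(V)#G, D₁(ab) = D₁(a)σ(b) + a D₁(b) and D₂(ab) = D₂(a)b + σ(a)D₂(b), and σ is an algebra automorphism. -/

import Mathlib

/-- The underlying vector space of `S_q(V)#G` in the motivational example: it has basis
`{w₁ⁱ w₂ʲ w₃ᵐ g}` indexed by `(i,j,m) ∈ ℕ³` and `g = σ₁^a σ₂^b ∈ G = (ℤ/n)²`. -/
abbrev SmashSpace (n : ℕ) := (ℕ × ℕ × ℕ × (ZMod n × ZMod n)) →₀ ℂ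

/-- The quantum integer `(m)_q = 1 + q + ⋯ + q^(m−1)`. -/
noncomputable def qInt (q : ℂ) (m : ℕ) : ℂ := ∑ i ∈ Finset.range m, q ^ i

/-- The character `χ₁ : G → ℂˣ` evaluated at `g⁻¹`, for `g = σ₁^a σ₂^b`: since
`σ₁(w₁) = q w₁` and `σ₂(w₁) = w₁`, we have `χ₁(g) = q^a`, so `χ₁(g⁻¹) = q^((−a).val)`. -/
noncomputable def chi1inv (n : ℕ) (q : ℂ) (g : ZMod n × ZMod n) : ℂ := q ^ (-g.1).val

/-- `D₁` on basis elements: `D₁(w₁ⁱw₂ʲw₃ᵐ g) = (i)_q q^(j+m) χ₁(g⁻¹) w₁^(i−1)w₂ʲw₃ᵐ σ₂ g`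
(a negative exponent is interpreted as `0`; indeed `(0)_q = 0`). -/
noncomputable def D1fun (n : ℕ) (q : ℂ) :
    ℕ × ℕ × ℕ × (ZMod n × ZMod n) → SmashSpace n
  | (i, j, m, (a, b)) =>
      (qInt q i * q ^ (j + m) * chi1inv n q (a, b)) •
        Finsupp.single (i - 1, j, m, (a, b + 1)) 1

/-- `D₂` on basis elements: `D₂(w₁ⁱw₂ʲw₃ᵐ g) = (j)_{q⁻¹} qⁱ w₁ⁱw₂^(j−1)w₃^(m+1) σ₁σ₂⁻¹ g`. -/
noncomputable def D2fun (n : ℕ) (q : ℂ) :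
    ℕ × ℕ × ℕ × (ZMod n × ZMod n) → SmashSpace n
  | (i, j, m, (a, b)) =>
      (qInt q⁻¹ j * q ^ i) • Finsupp.single (i, j - 1, m + 1, (a + 1, b - 1)) 1

/-- `σ` on basis elements: `σ(w₁ⁱw₂ʲw₃ᵐ g) = qⁱ χ₁(g⁻¹) w₁ⁱw₂ʲw₃ᵐ g`. -/
noncomputable def sigmafun (n : ℕ) (q : ℂ) :
    ℕ × ℕ × ℕ × (ZMod n × ZMod n) → SmashSpace n
  | (i, j, m, (a, b)) =>
      (q ^ i * chi1inv n q (a, b)) • Finsupp.single (i, j, m, (a, b)) 1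

/-- The `ℂ`-linear extension of a map defined on the monomial basis. -/
noncomputable def extend (n : ℕ)
    (f : ℕ × ℕ × ℕ × (ZMod n × ZMod n) → SmashSpace n) :
    SmashSpace n →ₗ[ℂ] SmashSpace n :=
  Finsupp.lsum ℂ fun p => LinearMap.toSpanSingleton ℂ (SmashSpace n) (f p)

/-- The smash product multiplication on basis elements:
`(w₁ⁱw₂ʲw₃ᵐ # σ₁^a σ₂^b)·(w₁^{i'}w₂^{j'}w₃^{m'} # σ₁^{a'}σ₂^{b'})
 = χ₁(g)^{i'} χ₂(g)^{j'} χ₃(g)^{m'} · q^{-i'(j+m)} · w₁^{i+i'}w₂^{j+j'}w₃^{m+m'} # (gg')`,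
using `χ₁(g) = q^a`, `χ₂(g) = q^b`, `χ₃(g) = q^{a+b}` and the commutation relations
`w₂w₁ = q⁻¹w₁w₂`, `w₃w₁ = q⁻¹w₁w₃`, `w₃w₂ = w₂w₃`. -/
noncomputable def mulfun (n : ℕ) (q : ℂ) :
    ℕ × ℕ × ℕ × (ZMod n × ZMod n) → ℕ × ℕ × ℕ × (ZMod n × ZMod n) → SmashSpace n
  | (i, j, m, (a, b)), (i', j', m', (a', b')) =>
      (q ^ (a.val * i' + b.val * j' + (a.val + b.val) * m') * q⁻¹ ^ (i' * (j + m))) •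
        Finsupp.single (i + i', j + j', m + m', (a + a', b + b')) 1

/-- The bilinear extension of `mulfun`: the multiplication of `S_q(V)#G`. -/
noncomputable def smul2 (n : ℕ) (q : ℂ) :
    SmashSpace n →ₗ[ℂ] SmashSpace n →ₗ[ℂ] SmashSpace n :=
  Finsupp.lsum ℂ fun p => LinearMap.toSpanSingleton ℂ (SmashSpace n →ₗ[ℂ] SmashSpace n)
    (Finsupp.lsum ℂ fun p' => LinearMap.toSpanSingleton ℂ (SmashSpace n) (mulfun n q p p'))


/-!
All maps are linear extensions of formulas on the monomial basis `w₁ⁱw₂ʲw₃ᵐ g`, and both sides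
of each identity are bilinear in `(a, b)`, so it suffices to compare them on pairs of basis
monomials. There every term is a scalar multiple of one monomial, and the scalar identities come
down to the `q`-Leibniz rule `(i + i')_q = (i)_q q^{i'} + (i')_q` together with multiplicativity
of the characters `g ↦ q ^ g.val` of `ZMod n`, which holds because `q ^ n = 1`.
-/

open Finsupp

def IsSkewDerivation {R M : Type*} [CommSemiring R] [AddCommMonoid M] [Module R M]
    (μ : M →ₗ[R] M →ₗ[R] M) (σ τ D : M →ₗ[R] M) : Prop :=
  ∀ a b, D (μ a b) = μ (D a) (σ b) + μ (τ a) (D b)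

section Basis
variable {R α β P : Type*} [CommSemiring R] [AddCommMonoid P] [Module R P]

theorem Finsupp.bilinear_ext {f g : (α →₀ R) →ₗ[R] (β →₀ R) →ₗ[R] P}
    (h : ∀ p p', f (single p 1) (single p' 1) = g (single p 1) (single p' 1)) : f = g :=
  lhom_ext' fun p => LinearMap.ext_ring <| lhom_ext' fun p' => LinearMap.ext_ring (h p p')

theorem isSkewDerivation_of_single {μ : (α →₀ R) →ₗ[R] (α →₀ R) →ₗ[R] (α →₀ R)}
    {σ τ D : (α →₀ R) →ₗ[R] (α →₀ R)}
    (h : ∀ p p', D (μ (single p 1) (single p' 1)) =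
      μ (D (single p 1)) (σ (single p' 1)) + μ (τ (single p 1)) (D (single p' 1))) :
    IsSkewDerivation μ σ τ D := fun a b =>
  LinearMap.congr_fun₂ (Finsupp.bilinear_ext (f := μ.compr₂ D)
    (g := (μ.comp D).compl₂ σ + (μ.comp τ).compl₂ D) h) a b

theorem map_mul_of_single {μ : (α →₀ R) →ₗ[R] (α →₀ R) →ₗ[R] (α →₀ R)}
    {σ : (α →₀ R) →ₗ[R] (α →₀ R)}
    (h : ∀ p p', σ (μ (single p 1) (single p' 1)) = μ (σ (single p 1)) (σ (single p' 1)))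
    (a b : α →₀ R) : σ (μ a b) = μ (σ a) (σ b) :=
  LinearMap.congr_fun₂ (Finsupp.bilinear_ext (f := μ.compr₂ σ) (g := (μ.comp σ).compl₂ σ) h) a b

theorem Finsupp.bijective_lsum_smul_single {K : Type*} [Semifield K] {c : α → K}
    (hc : ∀ p, c p ≠ 0) :
    Function.Bijective
      (lsum K fun p => LinearMap.toSpanSingleton K (α →₀ K) (c p • single p 1)) := by
  refine Function.bijective_iff_has_inverse.mpr
    ⟨lsum K fun p => LinearMap.toSpanSingleton K (α →₀ K) ((c p)⁻¹ • single p 1), ?_, ?_⟩ <;>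
  · intro x
    induction x using Finsupp.induction_linear with
    | zero => simp only [map_zero]
    | add x y hx hy => simp only [map_add, hx, hy]
    | single p r =>
      simp only [lsum_single, LinearMap.toSpanSingleton_apply, smul_single,
        smul_eq_mul, mul_assoc, mul_inv_cancel₀ (hc p), inv_mul_cancel₀ (hc p), mul_one]

end Basis

section Character
variable {M : Type*} {n : ℕ} [NeZero n]

theorem pow_val_add_of_pow_eq_one [Monoid M] {q : M} (hq : q ^ n = 1) (x y : ZMod n) :
    q ^ (x + y).val = q ^ x.val * q ^ y.val := by
  rw [ZMod.val_add, ← pow_eq_pow_mod _ hq, pow_add]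

theorem pow_val_neg_of_pow_eq_one [DivisionMonoid M] {q : M} (hq : q ^ n = 1) (x : ZMod n) :
    q ^ (-x).val = (q ^ x.val)⁻¹ :=
  eq_inv_of_mul_eq_one_left <| by
    rw [← pow_val_add_of_pow_eq_one hq, neg_add_cancel, ZMod.val_zero, pow_zero]

end Character

theorem qInt_add (Q : ℂ) (i i' : ℕ) : qInt Q (i + i') = qInt Q i * Q ^ i' + qInt Q i' := by
  rw [qInt, add_comm i, Finset.sum_range_add, add_comm]
  simp only [pow_add, ← Finset.mul_sum, qInt, mul_comm]

theorem qInt_zero (Q : ℂ) : qInt Q 0 = 0 := Finset.sum_range_zero _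

section Model
variable {n : ℕ} {q : ℂ}

theorem extend_single (f : ℕ × ℕ × ℕ × (ZMod n × ZMod n) → SmashSpace n)
    (p : ℕ × ℕ × ℕ × (ZMod n × ZMod n)) (c : ℂ) :
    extend n f (single p c) = c • f p := by
  simp [extend]

theorem smul2_single_single (p p' : ℕ × ℕ × ℕ × (ZMod n × ZMod n)) (c d : ℂ) :
    smul2 n q (single p c) (single p' d) = c • d • mulfun n q p p' := by
  simp [smul2]

theorem extend_D1fun_mulfun (hn : 2 ≤ n) (hq : q ^ n = 1) (hq0 : q ≠ 0)
    (i j m : ℕ) (a b : ZMod n) (i' j' m' : ℕ) (a' b' : ZMod n) :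
    extend n (D1fun n q) (mulfun n q (i, j, m, (a, b)) (i', j', m', (a', b'))) =
      smul2 n q (D1fun n q (i, j, m, (a, b))) (sigmafun n q (i', j', m', (a', b'))) +
        smul2 n q (single (i, j, m, (a, b)) 1) (D1fun n q (i', j', m', (a', b'))) := by
  have : NeZero n := ⟨by omega⟩
  have : Fact (1 < n) := ⟨hn⟩
  simp only [D1fun, sigmafun, mulfun, map_smul, LinearMap.smul_apply, extend_single,
    smul2_single_single, smul_smul, one_mul, chi1inv]
  -- For `i = 0` the term `D₁(a) σ(b)` carries `qInt q 0 = 0`, so its truncated index `0 - 1`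
  -- is harmless.
  obtain _ | i := i <;> obtain _ | i' := i'
  case zero.zero => simp [qInt_zero]
  case' zero.succ =>
    simp only [qInt_zero, zero_mul, mul_zero, zero_smul, zero_add, Nat.add_sub_cancel]
    rw [← add_assoc b b' 1]
    congr 1
  case' succ.zero =>
    simp only [qInt_zero, zero_mul, zero_smul, add_zero, Nat.add_sub_cancel]
    rw [add_right_comm b 1 b']
    congr 1
  case' succ.succ =>
    rw [show i + 1 + (i' + 1) - 1 = i + (i' + 1) by omega,
        show i + 1 - 1 + (i' + 1) = i + (i' + 1) by omega,
        show i + 1 + (i' + 1 - 1) = i + (i' + 1) by omega,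
        add_right_comm b 1 b', ← add_assoc b b' 1, ← add_smul]
    congr 1
    rw [qInt_add q (i + 1) (i' + 1)]
  all_goals
    simp only [Nat.add_sub_cancel, neg_add, pow_add, pow_mul, mul_pow, inv_pow,
      pow_val_add_of_pow_eq_one hq, pow_val_neg_of_pow_eq_one hq, ZMod.val_one, pow_one]
    field_simp

theorem extend_D2fun_mulfun (hn : 2 ≤ n) (hq : q ^ n = 1) (hq0 : q ≠ 0)
    (i j m : ℕ) (a b : ZMod n) (i' j' m' : ℕ) (a' b' : ZMod n) :
    extend n (D2fun n q) (mulfun n q (i, j, m, (a, b)) (i', j', m', (a', b'))) =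
      smul2 n q (D2fun n q (i, j, m, (a, b))) (single (i', j', m', (a', b')) 1) +
        smul2 n q (sigmafun n q (i, j, m, (a, b))) (D2fun n q (i', j', m', (a', b'))) := by
  have : NeZero n := ⟨by omega⟩
  have : Fact (1 < n) := ⟨hn⟩
  simp only [D2fun, sigmafun, mulfun, map_smul, LinearMap.smul_apply, extend_single,
    smul2_single_single, smul_smul, one_mul, chi1inv]
  obtain _ | j := j <;> obtain _ | j' := j'
  case zero.zero => simp [qInt_zero]
  case' zero.succ =>
    simp only [qInt_zero, zero_mul, zero_smul, zero_add, Nat.add_sub_cancel]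
    rw [← add_assoc m m' 1, ← add_assoc a a' 1, ← add_sub_assoc b b' 1]
    congr 1
  case' succ.zero =>
    simp only [qInt_zero, zero_mul, zero_smul, add_zero, Nat.add_sub_cancel]
    rw [add_right_comm m 1 m', add_right_comm a 1 a', sub_add_eq_add_sub b 1 b']
    congr 1
  case' succ.succ =>
    rw [show j + 1 + (j' + 1) - 1 = j + (j' + 1) by omega,
        show j + 1 - 1 + (j' + 1) = j + (j' + 1) by omega,
        show j + 1 + (j' + 1 - 1) = j + (j' + 1) by omega,
        add_right_comm m 1 m', ← add_assoc m m' 1, add_right_comm a 1 a', ← add_assoc a a' 1,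
        sub_add_eq_add_sub b 1 b', ← add_sub_assoc b b' 1, ← add_smul]
    congr 1
    rw [qInt_add q⁻¹ (j + 1) (j' + 1)]
  all_goals
    simp only [Nat.add_sub_cancel, sub_eq_add_neg, pow_add, pow_mul, mul_pow, inv_pow,
      pow_val_add_of_pow_eq_one hq, pow_val_neg_of_pow_eq_one hq, ZMod.val_one, pow_one]
    field_simp

theorem extend_sigmafun_mulfun (hq : q ^ n = 1) [NeZero n] (p p' : ℕ × ℕ × ℕ × (ZMod n × ZMod n)) :
    extend n (sigmafun n q) (mulfun n q p p') =
      smul2 n q (sigmafun n q p) (sigmafun n q p') := by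
  obtain ⟨i, j, m, a, b⟩ := p
  obtain ⟨i', j', m', a', b'⟩ := p'
  simp only [sigmafun, mulfun, map_smul, LinearMap.smul_apply, extend_single,
    smul2_single_single, smul_smul, one_mul, chi1inv]
  congr 1
  simp only [neg_add, pow_val_add_of_pow_eq_one hq, pow_add]
  ring

theorem isSkewDerivation_D1 (hn : 2 ≤ n) (hq : q ^ n = 1) (hq0 : q ≠ 0) :
    IsSkewDerivation (smul2 n q) (extend n (sigmafun n q)) LinearMap.id (extend n (D1fun n q)) :=
  isSkewDerivation_of_single fun ⟨i, j, m, a, b⟩ ⟨i', j', m', a', b'⟩ => by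
    simpa only [extend_single, smul2_single_single, one_smul, LinearMap.id_apply] using
      extend_D1fun_mulfun hn hq hq0 i j m a b i' j' m' a' b'

theorem isSkewDerivation_D2 (hn : 2 ≤ n) (hq : q ^ n = 1) (hq0 : q ≠ 0) :
    IsSkewDerivation (smul2 n q) LinearMap.id (extend n (sigmafun n q)) (extend n (D2fun n q)) :=
  isSkewDerivation_of_single fun ⟨i, j, m, a, b⟩ ⟨i', j', m', a', b'⟩ => by
    simpa only [extend_single, smul2_single_single, one_smul, LinearMap.id_apply] using
      extend_D2fun_mulfun hn hq hq0 i j m a b i' j' m' a' b'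

theorem extend_sigmafun_smul2 [NeZero n] (hq : q ^ n = 1) (x y : SmashSpace n) :
    extend n (sigmafun n q) (smul2 n q x y) =
      smul2 n q (extend n (sigmafun n q) x) (extend n (sigmafun n q) y) :=
  map_mul_of_single (fun p p' => by
    simpa only [extend_single, smul2_single_single, one_smul] using extend_sigmafun_mulfun hq p p') x y

theorem extend_sigmafun_one :
    extend n (sigmafun n q) (single (0, 0, 0, (0, 0)) 1) = single (0, 0, 0, (0, 0)) 1 := by
  simp [extend_single, sigmafun, chi1inv]

theorem bijective_extend_sigmafun (hq0 : q ≠ 0) :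
    Function.Bijective (extend n (sigmafun n q)) := by
  have : sigmafun n q = fun p => (q ^ p.1 * chi1inv n q p.2.2.2) • single p 1 :=
    funext fun ⟨_, _, _, _, _⟩ => rfl
  rw [extend, this]
  exact Finsupp.bijective_lsum_smul_single fun _ =>
    mul_ne_zero (pow_ne_zero _ hq0) (pow_ne_zero _ hq0)

end Model

/-- In the motivational example, `D₁` is a `(σ,1)`-skew derivation, `D₂` is a
`(1,σ)`-skew derivation of `S_q(V)#G`, and `σ` is an algebra automorphism: for all
`a, b ∈ S_q(V)#G`, `D₁(ab) = D₁(a)σ(b) + a D₁(b)`, `D₂(ab) = D₂(a)b + σ(a)D₂(b)`,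
`σ(ab) = σ(a)σ(b)`, `σ(1) = 1`, and `σ` is bijective. -/
theorem motivational_skew_derivations
    (n : ℕ) (hn : 2 ≤ n) (q : ℂ) (hq : IsPrimitiveRoot q n) :
    (∀ a b : SmashSpace n,
      extend n (D1fun n q) (smul2 n q a b) =
        smul2 n q (extend n (D1fun n q) a) (extend n (sigmafun n q) b) +
          smul2 n q a (extend n (D1fun n q) b)) ∧
    (∀ a b : SmashSpace n,
      extend n (D2fun n q) (smul2 n q a b) =
        smul2 n q (extend n (D2fun n q) a) b +
          smul2 n q (extend n (sigmafun n q) a) (extend n (D2fun n q) b)) ∧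
    (∀ a b : SmashSpace n,
      extend n (sigmafun n q) (smul2 n q a b) =
        smul2 n q (extend n (sigmafun n q) a) (extend n (sigmafun n q) b)) ∧
    extend n (sigmafun n q) (Finsupp.single (0, 0, 0, (0, 0)) 1) =
      Finsupp.single (0, 0, 0, (0, 0)) 1 ∧
    Function.Bijective (extend n (sigmafun n q)) := by
  have : NeZero n := ⟨by omega⟩
  have hq1 : q ^ n = 1 := hq.pow_eq_one
  have hq0 : q ≠ 0 := hq.ne_zero (NeZero.ne n)
  exact ⟨isSkewDerivation_D1 hn hq1 hq0, isSkewDerivation_D2 hn hq1 hq0,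
    extend_sigmafun_smul2 hq1, extend_sigmafun_one, bijective_extend_sigmafun hq0⟩
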